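/- arXiv:1309.2167 — 3 statements merged into one kernel-verified Lean document; each statement's English description precedes it below -/
import Mathlib

section
/- For every integer k, the gamma function Γ is injective on the set D_k = { z ∈ ℂ₊ : −(k+1)π < Im L(z) < −kπ }. -/
open Complex

/-- The holomorphic branch `L` of `log Γ` on `ℂ ∖ (−∞,0]`:
`L(z) = −γz − Log z − ∑_{k=1}^∞ (Log(1 + z/k) − z/k)`. -/
noncomputable def logGamma (z : ℂ) : ℂ :=
  -(Real.eulerMascheroniConstant : ℂ) * z - Complex.log z -
    ∑' k : ℕ, (Complex.log (1 + z / (k + 1)) - z / (k + 1))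

/-!
On `ℂ₊` we have `exp ∘ L = Γ`: the exponential of the `n`-th partial sum of `L` is Gauss's
approximant `GammaSeq z n` times `exp (z (H_n - log n - γ))`, and `H_n - log n → γ`. Hence
`Γ z₁ = Γ z₂` gives `L z₁ - L z₂ ∈ 2πiℤ`, and on `D_k` the imaginary parts of `L` differ
by less than `π`, so `L z₁ = L z₂`.

`L` is injective on `ℂ₊` because its difference quotients there have positive imaginary part:
`-Log z` and every term `-(Log (1 + z/k) - z/k)` have derivatives `-1/z` and `1/k - 1/(z + k)`,
with positive imaginary part on `ℂ₊`, and the mean value theorem for the imaginary part along a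
segment passes this on to their difference quotients. Arguing termwise with difference quotients
avoids differentiating the series.
-/

open Filter Topology Finset
open scoped Nat

local notation "γ" => (Real.eulerMascheroniConstant : ℂ)

namespace Complex

lemma summable_log_one_add_sub_self {ι : Type*} {f : ι → ℂ}
    (hf : Summable fun i => ‖f i‖ ^ 2) : Summable fun i => log (1 + f i) - f i := by
  have hf0 : Tendsto f cofinite (𝓝 0) := by
    rw [tendsto_zero_iff_norm_tendsto_zero]
    simpa [Real.sqrt_sq (norm_nonneg _)] using hf.tendsto_cofinite_zero.sqrt
  exact summable_of_isBigO hf <| by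
    simpa [norm_pow, Function.comp_def] using (log_sub_self_isBigO.comp_tendsto hf0).norm_right

lemma prod_range_succ_add_natCast (z : ℂ) (n : ℕ) :
    ∏ j ∈ range (n + 1), (z + j) = z * n ! * ∏ k ∈ range n, (1 + z / (k + 1)) := by
  induction n with
  | zero => simp
  | succ n ih =>
    have hn : (n : ℂ) + 1 ≠ 0 := Nat.cast_add_one_ne_zero n
    rw [prod_range_succ, ih, prod_range_succ, Nat.factorial_succ]
    push_cast
    field_simp
    ring

lemma GammaSeq_eq_exp_div_prod (z : ℂ) {n : ℕ} (hn : n ≠ 0) :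
    GammaSeq z n = exp (z * log n) / (z * ∏ k ∈ range n, (1 + z / (k + 1))) := by
  have hfac : (n ! : ℂ) ≠ 0 := by exact_mod_cast n.factorial_ne_zero
  rw [GammaSeq, prod_range_succ_add_natCast, cpow_def_of_ne_zero (by exact_mod_cast hn),
    mul_comm (log _)]
  field_simp

theorem exists_mem_segment_im_slope_eq {f f' : ℂ → ℂ} {a b : ℂ} (hab : a ≠ b)
    (hf : ∀ w ∈ segment ℝ a b, HasDerivAt f (f' w) w) :
    ∃ w ∈ segment ℝ a b, (slope f a b).im = (f' w).im := by
  set d := b - a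
  have hd : d ≠ 0 := sub_ne_zero.mpr hab.symm
  let p : ℝ → ℂ := fun t => a + t * d
  have hp : ∀ t ∈ Set.Icc (0 : ℝ) 1, p t ∈ segment ℝ a b := fun t ht => by
    rw [segment_eq_image']
    exact ⟨t, ht, by simp [p, d]⟩
  have hφ : ∀ t ∈ Set.Icc (0 : ℝ) 1,
      HasDerivAt (fun t => (d⁻¹ * f (p t)).im) (f' (p t)).im t := fun t ht => by
    have hpd : HasDerivAt p d t := by
      simpa only [one_mul, id] using (((hasDerivAt_id _).mul_const d).const_add a).comp_ofReal
    refine (imCLM.hasFDerivAt.comp_hasDerivAt t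
      (((hf _ (hp t ht)).comp t hpd).const_mul d⁻¹)).congr_deriv ?_
    rw [imCLM_apply, mul_left_comm, inv_mul_cancel₀ hd, mul_one]
  obtain ⟨c, hc, hslope⟩ := exists_hasDerivAt_eq_slope _ _ zero_lt_one
    (fun t ht => (hφ t ht).continuousAt.continuousWithinAt)
    (fun t ht => hφ t (Set.Ioo_subset_Icc_self ht))
  refine ⟨p c, hp c (Set.Ioo_subset_Icc_self hc), ?_⟩
  rw [hslope, slope_def_field]
  simp [p, d, div_eq_inv_mul, mul_sub]

theorem _root_.Convex.im_slope_neg {s : Set ℂ} (hs : Convex ℝ s) {f f' : ℂ → ℂ}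
    (hf : ∀ w ∈ s, HasDerivAt f (f' w) w) (hf' : ∀ w ∈ s, (f' w).im < 0) {a b : ℂ}
    (ha : a ∈ s) (hb : b ∈ s) (hab : a ≠ b) : (slope f a b).im < 0 := by
  obtain ⟨w, hw, hslope⟩ :=
    exists_mem_segment_im_slope_eq hab fun w hw => hf w (hs.segment_subset ha hb hw)
  exact hslope ▸ hf' w (hs.segment_subset ha hb hw)

lemma inv_im_neg {z : ℂ} (hz : 0 < z.im) : (z⁻¹).im < 0 := by
  have : 0 < normSq z := normSq_pos.mpr fun h => by simp [h] at hz
  rw [inv_im, neg_div]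
  exact neg_neg_of_pos (div_pos hz this)

lemma hasDerivAt_log_one_add_div_sub_div {r : ℝ} (hr : 0 < r) {w : ℂ} (hw : 0 < w.im) :
    HasDerivAt (fun w => log (1 + w / r) - w / r) ((w + r)⁻¹ - (r : ℂ)⁻¹) w := by
  have hslit : 1 + w / r ∈ slitPlane :=
    mem_slitPlane_iff.mpr (Or.inr (by rw [add_im, one_im, zero_add, div_ofReal_im]; positivity))
  have hr0 : (r : ℂ) ≠ 0 := ofReal_ne_zero.mpr hr.ne'
  refine ((((hasDerivAt_id w).div_const (r : ℂ)).const_add 1).clog hslit |>.sub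
    ((hasDerivAt_id w).div_const (r : ℂ))).congr_deriv ?_
  rw [id, one_add_div hr0, div_div_div_cancel_right₀ hr0, add_comm (r : ℂ), one_div, one_div]

lemma eq_of_exp_eq_of_abs_im_sub_lt {u v : ℂ} (h : exp u = exp v)
    (him : |u.im - v.im| < 2 * Real.pi) : u = v := by
  obtain ⟨n, rfl⟩ := exp_eq_exp_iff_exists_int.mp h
  have hn : |(n : ℝ)| * (2 * Real.pi) < 1 * (2 * Real.pi) := by
    simpa [abs_mul, abs_of_pos Real.pi_pos, mul_comm] using him
  obtain rfl : n = 0 :=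
    Int.abs_lt_one_iff.mp (by exact_mod_cast lt_of_mul_lt_mul_right hn Real.two_pi_pos.le)
  simp

end Complex

noncomputable def logGammaTerm (k : ℕ) (z : ℂ) : ℂ :=
  log (1 + z / (k + 1)) - z / (k + 1)

noncomputable def logGammaSeq (z : ℂ) (n : ℕ) : ℂ :=
  -γ * z - log z - ∑ k ∈ range n, logGammaTerm k z

lemma summable_logGammaTerm (z : ℂ) : Summable (logGammaTerm · z) := by
  refine summable_log_one_add_sub_self ?_
  have h := ((summable_nat_add_iff 1).mpr (Real.summable_one_div_nat_pow.mpr one_lt_two)).mul_left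
    (‖z‖ ^ 2)
  refine h.congr fun k => ?_
  rw [norm_div, div_pow, ← Nat.cast_add_one, norm_natCast]
  push_cast
  ring

lemma logGamma_eq_tsum (z : ℂ) : logGamma z = -γ * z - log z - ∑' k, logGammaTerm k z := rfl

lemma tendsto_logGammaSeq (z : ℂ) : Tendsto (logGammaSeq z) atTop (𝓝 (logGamma z)) :=
  tendsto_const_nhds.sub (summable_logGammaTerm z).hasSum.tendsto_sum_nat

lemma exp_logGammaSeq {z : ℂ} (hz : ∀ m : ℕ, z ≠ -m) {n : ℕ} (hn : n ≠ 0) :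
    exp (logGammaSeq z n) = GammaSeq z n *
      exp (z * ((harmonic n - Real.log n - Real.eulerMascheroniConstant : ℝ) : ℂ)) := by
  have hz0 : z ≠ 0 := by simpa using hz 0
  have hk (k : ℕ) : 1 + z / (k + 1) ≠ 0 := by
    intro h
    apply hz (k + 1)
    push_cast
    field_simp at h
    linear_combination h
  have hH : ∑ k ∈ range n, z / (k + 1) = z * harmonic n := by
    simp [harmonic, mul_sum, div_eq_mul_inv]
  simp only [logGammaSeq, logGammaTerm]
  rw [sum_sub_distrib, hH, GammaSeq_eq_exp_div_prod z hn,
    div_mul_eq_mul_div, ← exp_add,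
    show -γ * z - log z - (∑ k ∈ range n, log (1 + z / (k + 1)) - z * harmonic n) =
      z * (harmonic n - γ) - (log z + ∑ k ∈ range n, log (1 + z / (k + 1))) by ring,
    exp_sub, exp_add, exp_log hz0, exp_sum, prod_congr rfl fun k _ => exp_log (hk k)]
  push_cast
  congr 2
  ring

theorem exp_logGamma {z : ℂ} (hz : ∀ m : ℕ, z ≠ -m) : exp (logGamma z) = Gamma z := by
  have hγ : Tendsto (fun n : ℕ => harmonic n - Real.log n - Real.eulerMascheroniConstant) atTop
      (𝓝 0) := by
    simpa using Real.tendsto_harmonic_sub_log.sub_const Real.eulerMascheroniConstant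
  have hG := (GammaSeq_tendsto_Gamma z).mul
    ((continuous_exp.tendsto _).comp (((continuous_ofReal.tendsto 0).comp hγ).const_mul z))
  rw [ofReal_zero, mul_zero, exp_zero, mul_one] at hG
  refine tendsto_nhds_unique ?_ hG
  refine ((continuous_exp.tendsto _).comp (tendsto_logGammaSeq z)).congr' ?_
  filter_upwards [eventually_ne_atTop 0] with n hn
  exact exp_logGammaSeq hz hn

lemma slope_logGamma {a b : ℂ} (hab : a ≠ b) :
    slope logGamma a b = -γ - slope log a b - ∑' k, slope (logGammaTerm k) a b := by
  simp only [slope_def_field, logGamma_eq_tsum, tsum_div_const]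
  rw [(summable_logGammaTerm b).tsum_sub (summable_logGammaTerm a)]
  field_simp [sub_ne_zero.mpr hab.symm]
  ring

lemma im_slope_logGammaTerm_neg (k : ℕ) {a b : ℂ} (ha : 0 < a.im) (hb : 0 < b.im)
    (hab : a ≠ b) : (slope (logGammaTerm k) a b).im < 0 := by
  have hr : (0 : ℝ) < k + 1 := by positivity
  have hterm : logGammaTerm k =
      fun w => log (1 + w / ((k + 1 : ℝ) : ℂ)) - w / ((k + 1 : ℝ) : ℂ) := by
    ext w
    push_cast
    rfl
  rw [hterm]
  refine (convex_halfSpace_im_gt 0).im_slope_neg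
    (fun w hw => hasDerivAt_log_one_add_div_sub_div hr hw) (fun w hw => ?_) ha hb hab
  rw [sub_im, ← ofReal_inv, ofReal_im, sub_zero]
  exact inv_im_neg (by simpa using hw)

lemma im_slope_logGamma_pos {a b : ℂ} (ha : 0 < a.im) (hb : 0 < b.im) (hab : a ≠ b) :
    0 < (slope logGamma a b).im := by
  have hlog : (slope log a b).im < 0 :=
    (convex_halfSpace_im_gt 0).im_slope_neg
      (fun w hw => hasDerivAt_log (mem_slitPlane_iff.mpr (Or.inr (ne_of_gt hw))))
      (fun w hw => inv_im_neg hw) ha hb hab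
  have hsum : Summable fun k => slope (logGammaTerm k) a b := by
    simpa only [slope_def_field] using
      ((summable_logGammaTerm b).sub (summable_logGammaTerm a)).div_const (b - a)
  have hterms : ∑' k, (slope (logGammaTerm k) a b).im ≤ 0 :=
    tsum_nonpos fun k => (im_slope_logGammaTerm_neg k ha hb hab).le
  rw [slope_logGamma hab, sub_im, sub_im, im_tsum hsum, neg_im, ofReal_im]
  linarith

theorem logGamma_injOn : Set.InjOn logGamma {z | 0 < z.im} := by
  intro a ha b hb h
  by_contra hab
  have := im_slope_logGamma_pos ha hb hab
  rw [slope_def_field, h, sub_self, zero_div, zero_im] at this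
  exact this.false

/-- For every integer `k`, the gamma function is injective on
`D_k = { z ∈ ℂ₊ : −(k+1)π < Im L(z) < −kπ }`. -/
theorem gamma_injOn_Dk (k : ℤ) :
    Set.InjOn Complex.Gamma
      {z : ℂ | 0 < z.im ∧ -((k : ℝ) + 1) * Real.pi < (logGamma z).im ∧
        (logGamma z).im < -(k : ℝ) * Real.pi} := by
  have hpole {z : ℂ} (hz : 0 < z.im) (m : ℕ) : z ≠ -m := fun h => by simp [h] at hz
  rintro z₁ ⟨h₁, hlo₁, hhi₁⟩ z₂ ⟨h₂, hlo₂, hhi₂⟩ hΓ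
  refine logGamma_injOn h₁ h₂ (eq_of_exp_eq_of_abs_im_sub_lt ?_ ?_)
  · rw [exp_logGamma (hpole h₁), exp_logGamma (hpole h₂), hΓ]
  · rw [abs_sub_lt_iff]
    constructor <;> linarith [Real.pi_pos]
end

section
/- The complex sine function, restricted to the open half-strip S = { z ∈ ℂ : −π/2 < Re z < π/2 and Im z > 0 }, is injective, and its image is exactly the open upper half plane: sin(S) = { w ∈ ℂ : Im w > 0 }. -/
/-!
On the closed strip `|Re z| ≤ π/2` we have `Im (sin z) = cos (Re z) · sinh (Im z)` with
`cos (Re z) ≥ 0`, so `Im (sin z) > 0` exactly on the open half-strip. Every value of `sin` is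
attained on the closed strip (periodicity and `sin (π - z) = sin z`), which gives the image.
Injectivity holds on the whole open strip: `sin x = sin y` forces `y = x + 2kπ` or
`x + y = (2k + 1)π`, and comparing real parts leaves only `y = x`.
-/

open Complex

theorem Int.eq_zero_of_mul_pi_mem_Ioo {m : ℤ}
    (h : (m : ℝ) * Real.pi ∈ Set.Ioo (-Real.pi) Real.pi) : m = 0 := by
  have hm : (m : ℝ) ∈ Set.Ioo (-1) 1 := by
    constructor <;> nlinarith [h.1, h.2, Real.pi_pos]
  have h₁ : -1 < m := by exact_mod_cast hm.1
  have h₂ : m < 1 := by exact_mod_cast hm.2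
  omega

namespace Complex

theorem sin_im_eq (z : ℂ) : (sin z).im = Real.cos z.re * Real.sinh z.im := by
  rw [sin_eq]
  simp [cos_ofReal_re, sinh_ofReal_re]

theorem injOn_sin_re_mem_Ioo :
    Set.InjOn sin {z : ℂ | z.re ∈ Set.Ioo (-(Real.pi / 2)) (Real.pi / 2)} := by
  rintro x ⟨hx₁, hx₂⟩ y ⟨hy₁, hy₂⟩ hxy
  obtain ⟨k, hy | hy⟩ := sin_eq_sin_iff.mp hxy
  · have hre : y.re = ((2 * k : ℤ) : ℝ) * Real.pi + x.re := by rw [hy]; simp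
    have hk : 2 * k = 0 := Int.eq_zero_of_mul_pi_mem_Ioo ⟨by linarith, by linarith⟩
    rw [hy, show (k : ℂ) = 0 by exact_mod_cast (by omega : k = 0)]
    simp
  · have hre : x.re + y.re = ((2 * k + 1 : ℤ) : ℝ) * Real.pi := by rw [hy]; push_cast; simp
    have hk : 2 * k + 1 = 0 := Int.eq_zero_of_mul_pi_mem_Ioo ⟨by linarith, by linarith⟩
    omega

theorem exists_sin_eq_re_mem_Icc (w : ℂ) :
    ∃ z : ℂ, z.re ∈ Set.Icc (-(Real.pi / 2)) (Real.pi / 2) ∧ sin z = w := by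
  obtain ⟨z, rfl⟩ := sin_surjective w
  obtain ⟨z₁, hz₁, hsin⟩ : ∃ z₁ : ℂ,
      z₁.re ∈ Set.Ico (-(Real.pi / 2)) (-(Real.pi / 2) + 2 * Real.pi) ∧ sin z₁ = sin z := by
    set n := toIcoDiv Real.two_pi_pos (-(Real.pi / 2)) z.re
    refine ⟨z - n * (2 * Real.pi), ?_, sin_sub_int_mul_two_pi z n⟩
    convert sub_toIcoDiv_zsmul_mem_Ico Real.two_pi_pos (-(Real.pi / 2)) z.re using 1
    simp [n]
  rcases le_or_gt z₁.re (Real.pi / 2) with h | h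
  · exact ⟨z₁, ⟨hz₁.1, h⟩, hsin⟩
  · refine ⟨Real.pi - z₁, ⟨?_, ?_⟩, by rw [sin_pi_sub, hsin]⟩ <;>
      simp only [sub_re, ofReal_re] <;> linarith [hz₁.2]

theorem sin_im_pos_iff_of_re_mem_Icc {z : ℂ}
    (hz : z.re ∈ Set.Icc (-(Real.pi / 2)) (Real.pi / 2)) :
    0 < (sin z).im ↔ z.re ∈ Set.Ioo (-(Real.pi / 2)) (Real.pi / 2) ∧ 0 < z.im := by
  rw [sin_im_eq]
  constructor
  · intro h
    have hcos : 0 < Real.cos z.re :=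
      (Real.cos_nonneg_of_mem_Icc hz).lt_of_ne fun h0 => by simp [← h0] at h
    refine ⟨⟨hz.1.lt_of_ne ?_, hz.2.lt_of_ne ?_⟩,
      Real.sinh_pos_iff.mp (pos_of_mul_pos_right h hcos.le)⟩
    · rintro h0; simp [← h0] at hcos
    · rintro h0; simp [h0] at hcos
  · rintro ⟨hre, him⟩
    exact mul_pos (Real.cos_pos_of_mem_Ioo hre) (Real.sinh_pos_iff.mpr him)

end Complex

/-- The complex sine is injective on the open half-strip
`S = { z : −π/2 < Re z < π/2, Im z > 0 }`, and `sin(S)` is exactly the open upper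
half plane. -/
theorem sin_injOn_halfStrip_and_image :
    Set.InjOn Complex.sin
      {z : ℂ | -(Real.pi / 2) < z.re ∧ z.re < Real.pi / 2 ∧ 0 < z.im} ∧
    Complex.sin '' {z : ℂ | -(Real.pi / 2) < z.re ∧ z.re < Real.pi / 2 ∧ 0 < z.im} =
      {w : ℂ | 0 < w.im} := by
  refine ⟨injOn_sin_re_mem_Ioo.mono fun z hz => show z.re ∈ Set.Ioo _ _ from ⟨hz.1, hz.2.1⟩,
    Set.ext fun w => ⟨?_, ?_⟩⟩
  · rintro ⟨z, ⟨hre₁, hre₂, him⟩, rfl⟩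
    exact (sin_im_pos_iff_of_re_mem_Icc ⟨hre₁.le, hre₂.le⟩).mpr ⟨⟨hre₁, hre₂⟩, him⟩
  · intro hw
    obtain ⟨z, hz, rfl⟩ := exists_sin_eq_re_mem_Icc w
    obtain ⟨⟨hre₁, hre₂⟩, him⟩ := (sin_im_pos_iff_of_re_mem_Icc hz).mp hw
    exact ⟨z, ⟨hre₁, hre₂, him⟩, rfl⟩
end

section
/- Let r ≥ 1 and suppose u > 0 satisfies (log f)″(u) = 0 and (log f)″(x) > 0 for all real x > u. Then: (i) the derivative (log f)′ is injective on the half plane {z : Re z > u} and maps {z : Re z > u, Im z > 0} into ℂ₊; (ii) log f is injective on {z : Re z > u, Im z > 0} and injective on {z : Re z > u, Im z < 0}. -/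
open Complex

/-- The entire genus-2 function
`f(z) = z^r e^{az²+bz} ∏_k (1 + z/λ_k) e^{−z/λ_k + z²/(2λ_k²)}`. -/
noncomputable def genus2fun (r : ℕ) (a b : ℝ) (lam : ℕ → ℝ) (z : ℂ) : ℂ :=
  z ^ r * Complex.exp ((a : ℂ) * z ^ 2 + (b : ℂ) * z) *
    ∏' k : ℕ, ((1 + z / (lam k : ℂ)) *
      Complex.exp (-z / (lam k : ℂ) + z ^ 2 / (2 * (lam k : ℂ) ^ 2)))

/-- The holomorphic branch of `log f` on `ℂ ∖ (−∞,0]`: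
`log f(z) = r·Log z + az² + bz + ∑_k (Log(1 + z/λ_k) − z/λ_k + z²/(2λ_k²))`. -/
noncomputable def genus2log (r : ℕ) (a b : ℝ) (lam : ℕ → ℝ) (z : ℂ) : ℂ :=
  (r : ℂ) * Complex.log z + (a : ℂ) * z ^ 2 + (b : ℂ) * z +
    ∑' k : ℕ, (Complex.log (1 + z / (lam k : ℂ)) - z / (lam k : ℂ) +
      z ^ 2 / (2 * (lam k : ℂ) ^ 2))

/-!
On `Re z > 0` the second derivative is `(log f)″(z) = -r/z² + 2a + ∑ (λ_k⁻² - (λ_k + z)⁻²)`.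
Comparing term by term with the real point `x = Re z`, using only `|w|² ≥ (Re w)²`, gives
`Re (log f)″(z) ≥ (log f)″(x)` and `y · Im (log f)′(z) ≥ y² · (log f)″(x)` for `y = Im z`.
For `Re z > u` the right-hand sides are positive, so `(log f)″` has positive real part and
`Im (log f)′` has the sign of `Im z`. Injectivity then follows from the Noshiro–Warschawski
criterion: on a convex domain, a function whose derivative stays in an open half plane bounded
by a line through `0` is injective, since `t ↦ Re (c · w̄ · f (p + t w))` is strictly monotone
along every segment.
-/

open Filter Topology Set ComplexConjugate

theorem Complex.re_inv_sq_le_inv_re_sq (w : ℂ) : ((w ^ 2)⁻¹).re ≤ (w.re ^ 2)⁻¹ := by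
  rw [inv_re, map_pow, normSq_apply, pow_two w, mul_re]
  rcases eq_or_ne w.re 0 with h | h
  · rw [h, zero_mul, zero_sub, zero_pow two_ne_zero, inv_zero]
    exact div_nonpos_of_nonpos_of_nonneg (by nlinarith) (by positivity)
  · have hx : 0 < w.re ^ 2 := by positivity
    have hD : 0 < (w.re * w.re + w.im * w.im) ^ 2 := by nlinarith [sq_nonneg w.im]
    rw [div_le_iff₀ hD, inv_mul_eq_div, le_div_iff₀ hx]
    nlinarith [sq_nonneg w.im, mul_nonneg hx.le (sq_nonneg w.im)]

theorem Complex.neg_sq_im_div_sq_re_le_im_mul_im_inv {w : ℂ} (hw : w.re ≠ 0) :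
    -(w.im ^ 2 / w.re ^ 2) ≤ w.im * (w⁻¹).im := by
  rw [inv_im, normSq_apply, mul_div_assoc', mul_neg, neg_div, neg_le_neg_iff, ← pow_two]
  gcongr
  nlinarith [sq_nonneg w.im]

theorem tendsto_inv_of_summable_one_div_pow {c : ℕ → ℝ} (hc : ∀ k, 0 ≤ c k) {n : ℕ}
    (hsum : Summable fun k => 1 / c k ^ n) :
    Tendsto (fun k => (c k)⁻¹) atTop (𝓝 0) := by
  have hpow : Tendsto (fun k => (c k)⁻¹ ^ n) atTop (𝓝 0) := by
    simpa only [one_div, inv_pow] using hsum.tendsto_atTop_zero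
  refine tendsto_order.2 ⟨fun a ha => .of_forall fun k => ha.trans_le (inv_nonneg.2 (hc k)),
    fun ε hε => ?_⟩
  filter_upwards [hpow.eventually (gt_mem_nhds (pow_pos hε n))] with k hk
  exact lt_of_pow_lt_pow_left₀ n hε.le hk

theorem hasDerivAt_tsum_of_norm_le_pow_mul {U : Set ℂ} (hUo : IsOpen U) (hUc : Convex ℝ U)
    {F F' : ℕ → ℂ → ℂ} {v : ℕ → ℝ} (n : ℕ) (hv : Summable v) (hv0 : ∀ k, 0 ≤ v k)
    (hF : ∀ k, ∀ w ∈ U, HasDerivAt (F k) (F' k w) w)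
    (hF' : ∀ k, ∀ w ∈ U, ‖F' k w‖ ≤ ‖w‖ ^ n * v k)
    {z : ℂ} (hz : z ∈ U) (hFz : Summable fun k => F k z) :
    HasDerivAt (fun w => ∑' k, F k w) (∑' k, F' k z) z := by
  have hzt : z ∈ U ∩ Metric.ball z 1 := ⟨hz, Metric.mem_ball_self one_pos⟩
  refine hasDerivAt_tsum_of_isPreconnected (hv.mul_left ((‖z‖ + 1) ^ n))
    (hUo.inter Metric.isOpen_ball) (hUc.inter (convex_ball z 1)).isPreconnected
    (fun k w hw => hF k w hw.1) (fun k w hw => (hF' k w hw.1).trans ?_) hzt hFz hzt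
  have : ‖w‖ ≤ ‖z‖ + 1 := by
    linarith [norm_le_norm_add_norm_sub' w z, mem_ball_iff_norm.1 hw.2]
  have := hv0 k
  gcongr

theorem Convex.injOn_of_hasDerivAt_of_re_mul_pos {s : Set ℂ} (hs : Convex ℝ s) {f g : ℂ → ℂ}
    (c : ℂ) (hf : ∀ z ∈ s, HasDerivAt f (g z) z) (hg : ∀ z ∈ s, 0 < (c * g z).re) :
    InjOn f s := by
  intro p hp q hq hpq
  by_contra hne
  set w := q - p
  have hw : w ≠ 0 := sub_ne_zero.2 (Ne.symm hne)
  have hseg : ∀ t ∈ Icc (0 : ℝ) 1, p + t • w ∈ s := fun t ht => hs.add_smul_sub_mem hp hq ht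
  have hderiv : ∀ t ∈ Icc (0 : ℝ) 1, HasDerivAt (fun t : ℝ => (c * conj w * f (p + t • w)).re)
      (normSq w * (c * g (p + t • w)).re) t := by
    intro t ht
    have hγ : HasDerivAt (fun t : ℝ => p + t • w) w t := by
      simpa using ((hasDerivAt_id t).smul_const w).const_add p
    refine (reCLM.hasFDerivAt.comp_hasDerivAt t
      (((hf _ (hseg t ht)).comp t hγ).const_mul (c * conj w))).congr_deriv ?_
    rw [reCLM_apply, show c * conj w * (g (p + t • w) * w) = normSq w * (c * g (p + t • w)) by
      rw [normSq_eq_conj_mul_self]; ring, re_ofReal_mul]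
  obtain ⟨t, ht, hslope⟩ := exists_hasDerivAt_eq_slope _ _ zero_lt_one
    (fun t ht => (hderiv t ht).continuousAt.continuousWithinAt)
    (fun t ht => hderiv t (Ioo_subset_Icc_self ht))
  have h1 : p + (1 : ℝ) • w = q := by simp [w]
  rw [zero_smul, add_zero, h1, hpq, sub_self, zero_div] at hslope
  exact (mul_pos (normSq_pos.2 hw) (hg _ (hseg t (Ioo_subset_Icc_self ht)))).ne' hslope

namespace Genus2

/-- `genus2log r a b lam z` unfolds to `r log z + a z² + b z + ∑' k, logFactor (lam k) z`. -/
noncomputable def logFactor (c : ℝ) (z : ℂ) : ℂ :=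
  log (1 + z / c) - z / c + z ^ 2 / (2 * (c : ℂ) ^ 2)

noncomputable def logFactorDeriv (c : ℝ) (z : ℂ) : ℂ :=
  ((c : ℂ) + z)⁻¹ - (c : ℂ)⁻¹ + z / (c : ℂ) ^ 2

noncomputable def logFactorDeriv2 (c : ℝ) (z : ℂ) : ℂ :=
  ((c : ℂ) ^ 2)⁻¹ - (((c : ℂ) + z) ^ 2)⁻¹

variable {c : ℝ} {z : ℂ}

lemma le_norm_ofReal_add (hz : 0 ≤ z.re) : c ≤ ‖(c : ℂ) + z‖ :=
  calc c ≤ ((c : ℂ) + z).re := by simp [hz]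
    _ ≤ ‖(c : ℂ) + z‖ := re_le_norm _

lemma ofReal_add_ne_zero (hc : 0 < c) (hz : 0 ≤ z.re) : (c : ℂ) + z ≠ 0 :=
  norm_pos_iff.1 (hc.trans_le (le_norm_ofReal_add hz))

lemma logFactor_eq_log_sub_logTaylor (c : ℝ) (z : ℂ) :
    logFactor c z = log (1 + z / c) - logTaylor 3 (z / c) := by
  simp [logFactor, logTaylor_succ, logTaylor_zero]
  ring

lemma hasDerivAt_logFactor (hc : 0 < c) (hz : 0 ≤ z.re) :
    HasDerivAt (logFactor c) (logFactorDeriv c z) z := by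
  have hc' : (c : ℂ) ≠ 0 := ofReal_ne_zero.2 hc.ne'
  have hslit : 1 + z / c ∈ slitPlane := by
    refine mem_slitPlane_iff.2 (Or.inl ?_)
    simp only [add_re, one_re, div_ofReal_re]
    positivity
  have hdiv : HasDerivAt (fun w : ℂ => w / c) (c : ℂ)⁻¹ z := by
    simpa using (hasDerivAt_id z).div_const (c : ℂ)
  have := (((hdiv.const_add 1).clog hslit).sub hdiv).add
    ((hasDerivAt_pow 2 z).div_const (2 * (c : ℂ) ^ 2))
  refine this.congr_deriv ?_
  have := ofReal_add_ne_zero hc hz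
  have : 1 + z / c ≠ 0 := slitPlane_ne_zero hslit
  simp only [logFactorDeriv]
  field_simp
  ring

lemma hasDerivAt_logFactorDeriv (hc : 0 < c) (hz : 0 ≤ z.re) :
    HasDerivAt (logFactorDeriv c) (logFactorDeriv2 c z) z := by
  have := ((((hasDerivAt_id z).const_add (c : ℂ)).inv (ofReal_add_ne_zero hc hz)).sub_const
    (c : ℂ)⁻¹).add ((hasDerivAt_id z).div_const ((c : ℂ) ^ 2))
  refine this.congr_deriv ?_
  simp [logFactorDeriv2]
  ring

lemma logFactorDeriv_eq (hc : 0 < c) (hz : 0 ≤ z.re) :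
    logFactorDeriv c z = z ^ 2 / ((c : ℂ) ^ 2 * (c + z)) := by
  have hc' : (c : ℂ) ≠ 0 := ofReal_ne_zero.2 hc.ne'
  have := ofReal_add_ne_zero hc hz
  simp only [logFactorDeriv]
  field_simp
  ring

lemma logFactorDeriv2_eq (hc : 0 < c) (hz : 0 ≤ z.re) :
    logFactorDeriv2 c z = z / ((c : ℂ) * (c + z)) * ((c : ℂ)⁻¹ + ((c : ℂ) + z)⁻¹) := by
  have hc' : (c : ℂ) ≠ 0 := ofReal_ne_zero.2 hc.ne'
  have := ofReal_add_ne_zero hc hz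
  simp only [logFactorDeriv2]
  field_simp
  ring

lemma norm_logFactorDeriv_le (hc : 0 < c) (hz : 0 ≤ z.re) :
    ‖logFactorDeriv c z‖ ≤ ‖z‖ ^ 2 * (1 / c ^ 3) := by
  have := le_norm_ofReal_add (c := c) hz
  rw [logFactorDeriv_eq hc hz, norm_div, norm_mul, norm_pow, norm_pow, norm_real,
    Real.norm_of_nonneg hc.le, mul_one_div, pow_succ c 2]
  gcongr

lemma norm_logFactorDeriv2_le (hc : 0 < c) (hz : 0 ≤ z.re) :
    ‖logFactorDeriv2 c z‖ ≤ ‖z‖ * (2 / c ^ 3) := by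
  have hcz := le_norm_ofReal_add (c := c) hz
  have hinv : ‖(c : ℂ)⁻¹ + ((c : ℂ) + z)⁻¹‖ ≤ 2 / c := by
    refine (norm_add_le _ _).trans ?_
    rw [norm_inv, norm_inv, norm_real, Real.norm_of_nonneg hc.le, ← one_add_one_eq_two,
      add_div, one_div]
    gcongr
  calc ‖logFactorDeriv2 c z‖ ≤ ‖z‖ / (c * c) * (2 / c) := by
        rw [logFactorDeriv2_eq hc hz, norm_mul, norm_div, norm_mul, norm_real,
          Real.norm_of_nonneg hc.le]
        gcongr
    _ = ‖z‖ * (2 / c ^ 3) := by ring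

lemma logFactorDeriv2_ofReal (c x : ℝ) :
    logFactorDeriv2 c x = ((c ^ 2)⁻¹ - ((c + x) ^ 2)⁻¹ : ℝ) := by
  simp [logFactorDeriv2]

lemma re_logFactorDeriv2 (c : ℝ) (z : ℂ) :
    (logFactorDeriv2 c z).re = (c ^ 2)⁻¹ - ((((c : ℂ) + z) ^ 2)⁻¹).re := by
  rw [logFactorDeriv2, sub_re, ← ofReal_pow, ← ofReal_inv, ofReal_re]

lemma im_logFactorDeriv (c : ℝ) (z : ℂ) :
    (logFactorDeriv c z).im = (((c : ℂ) + z)⁻¹).im + z.im / c ^ 2 := by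
  rw [logFactorDeriv, add_im, sub_im, ← ofReal_inv, ofReal_im, sub_zero, ← ofReal_pow,
    div_ofReal_im]

lemma re_logFactorDeriv2_ofReal_re_le (z : ℂ) :
    (logFactorDeriv2 c z.re).re ≤ (logFactorDeriv2 c z).re := by
  have := re_inv_sq_le_inv_re_sq ((c : ℂ) + z)
  rw [logFactorDeriv2_ofReal, ofReal_re, re_logFactorDeriv2]
  simp only [add_re, ofReal_re] at this
  linarith

lemma sq_im_mul_re_logFactorDeriv2_le (hc : 0 < c) (hz : 0 ≤ z.re) :
    z.im ^ 2 * (logFactorDeriv2 c z.re).re ≤ z.im * (logFactorDeriv c z).im := by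
  have hre : ((c : ℂ) + z).re = c + z.re := by simp
  have := neg_sq_im_div_sq_re_le_im_mul_im_inv (w := (c : ℂ) + z) (by rw [hre]; positivity)
  rw [hre, add_im, ofReal_im, zero_add] at this
  rw [logFactorDeriv2_ofReal, ofReal_re, im_logFactorDeriv]
  have hexpand : z.im ^ 2 * ((c ^ 2)⁻¹ - ((c + z.re) ^ 2)⁻¹) =
      z.im * (z.im / c ^ 2) - z.im ^ 2 / (c + z.re) ^ 2 := by ring
  rw [hexpand, mul_add]
  linarith

variable {lam : ℕ → ℝ}

lemma summable_logFactor (hpos : ∀ k, 0 < lam k) (hsum : Summable fun k => 1 / lam k ^ 3)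
    (z : ℂ) : Summable fun k => logFactor (lam k) z := by
  have hlim : Tendsto (fun k => z / lam k) atTop (𝓝 0) := by
    have := (continuous_ofReal.tendsto 0).comp
      (tendsto_inv_of_summable_one_div_pow (fun k => (hpos k).le) hsum)
    simpa [div_eq_mul_inv] using this.const_mul z
  refine summable_of_isBigO_nat (hsum.mul_left (‖z‖ ^ 3)) ?_
  simp only [logFactor_eq_log_sub_logTaylor]
  refine ((log_sub_logTaylor_isBigO 2).comp_tendsto hlim).trans_le fun k => ?_
  simp [abs_of_pos (hpos k), div_eq_mul_inv, mul_pow]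

lemma summable_logFactorDeriv (hpos : ∀ k, 0 < lam k) (hsum : Summable fun k => 1 / lam k ^ 3)
    {z : ℂ} (hz : 0 ≤ z.re) : Summable fun k => logFactorDeriv (lam k) z :=
  .of_norm_bounded (hsum.mul_left _) fun k => norm_logFactorDeriv_le (hpos k) hz

lemma summable_logFactorDeriv2 (hpos : ∀ k, 0 < lam k) (hsum : Summable fun k => 1 / lam k ^ 3)
    {z : ℂ} (hz : 0 ≤ z.re) : Summable fun k => logFactorDeriv2 (lam k) z :=
  .of_norm_bounded (hsum.mul_left (2 * ‖z‖)) fun k =>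
    (norm_logFactorDeriv2_le (hpos k) hz).trans_eq (by ring)

lemma hasDerivAt_tsum_logFactor (hpos : ∀ k, 0 < lam k)
    (hsum : Summable fun k => 1 / lam k ^ 3) {z : ℂ} (hz : 0 < z.re) :
    HasDerivAt (fun w => ∑' k, logFactor (lam k) w) (∑' k, logFactorDeriv (lam k) z) z :=
  hasDerivAt_tsum_of_norm_le_pow_mul (isOpen_lt continuous_const continuous_re)
    (convex_halfSpace_re_gt 0) 2 hsum (fun k => by have := hpos k; positivity)
    (fun k w hw => hasDerivAt_logFactor (hpos k) hw.le)
    (fun k w hw => norm_logFactorDeriv_le (hpos k) hw.le) hz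
    (summable_logFactor hpos hsum z)

lemma hasDerivAt_tsum_logFactorDeriv (hpos : ∀ k, 0 < lam k)
    (hsum : Summable fun k => 1 / lam k ^ 3) {z : ℂ} (hz : 0 < z.re) :
    HasDerivAt (fun w => ∑' k, logFactorDeriv (lam k) w) (∑' k, logFactorDeriv2 (lam k) z) z :=
  hasDerivAt_tsum_of_norm_le_pow_mul (isOpen_lt continuous_const continuous_re)
    (convex_halfSpace_re_gt 0) 1 (hsum.mul_left 2) (fun k => by have := hpos k; positivity)
    (fun k w hw => hasDerivAt_logFactorDeriv (hpos k) hw.le)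
    (fun k w hw => (norm_logFactorDeriv2_le (hpos k) hw.le).trans_eq (by ring)) hz
    (summable_logFactorDeriv hpos hsum hz.le)

end Genus2

noncomputable def genus2logDeriv (r : ℕ) (a b : ℝ) (lam : ℕ → ℝ) (z : ℂ) : ℂ :=
  r / z + 2 * a * z + b + ∑' k, Genus2.logFactorDeriv (lam k) z

noncomputable def genus2logDeriv2 (r : ℕ) (a : ℝ) (lam : ℕ → ℝ) (z : ℂ) : ℂ :=
  -r / z ^ 2 + 2 * a + ∑' k, Genus2.logFactorDeriv2 (lam k) z

section Genus2Derivatives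

open Genus2

variable {r : ℕ} {a b : ℝ} {lam : ℕ → ℝ} {z : ℂ}

theorem hasDerivAt_genus2log (hpos : ∀ k, 0 < lam k) (hsum : Summable fun k => 1 / lam k ^ 3)
    (hz : 0 < z.re) : HasDerivAt (genus2log r a b lam) (genus2logDeriv r a b lam z) z := by
  have hlog := (hasDerivAt_log (mem_slitPlane_iff.2 (Or.inl hz))).const_mul (r : ℂ)
  have := ((hlog.add ((hasDerivAt_pow 2 z).const_mul (a : ℂ))).add
    ((hasDerivAt_id z).const_mul (b : ℂ))).add (hasDerivAt_tsum_logFactor hpos hsum hz)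
  refine this.congr_deriv ?_
  simp only [genus2logDeriv]
  ring

theorem hasDerivAt_genus2logDeriv (hpos : ∀ k, 0 < lam k)
    (hsum : Summable fun k => 1 / lam k ^ 3) (hz : 0 < z.re) :
    HasDerivAt (genus2logDeriv r a b lam) (genus2logDeriv2 r a lam z) z := by
  have hz0 : z ≠ 0 := fun h => by simp [h] at hz
  have := ((((hasDerivAt_id z).inv hz0).const_mul (r : ℂ)).add
    ((hasDerivAt_id z).const_mul (2 * a : ℂ))).add_const (b : ℂ) |>.add
    (hasDerivAt_tsum_logFactorDeriv hpos hsum hz)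
  refine this.congr_deriv ?_
  simp only [genus2logDeriv2, id]
  ring

theorem deriv_genus2log (hpos : ∀ k, 0 < lam k) (hsum : Summable fun k => 1 / lam k ^ 3) :
    EqOn (deriv (genus2log r a b lam)) (genus2logDeriv r a b lam) {z | 0 < z.re} :=
  fun _ hz => (hasDerivAt_genus2log hpos hsum hz).deriv

theorem iteratedDeriv_two_genus2log (hpos : ∀ k, 0 < lam k)
    (hsum : Summable fun k => 1 / lam k ^ 3) (hz : 0 < z.re) :
    iteratedDeriv 2 (genus2log r a b lam) z = genus2logDeriv2 r a lam z := by
  rw [iteratedDeriv_succ, iteratedDeriv_one,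
    (deriv_genus2log hpos hsum).eventuallyEq_of_mem
      ((isOpen_lt continuous_const continuous_re).mem_nhds hz) |>.deriv_eq]
  exact (hasDerivAt_genus2logDeriv hpos hsum hz).deriv

theorem re_genus2logDeriv2_ofReal_re_le (hpos : ∀ k, 0 < lam k)
    (hsum : Summable fun k => 1 / lam k ^ 3) (hz : 0 < z.re) :
    (genus2logDeriv2 r a lam z.re).re ≤ (genus2logDeriv2 r a lam z).re := by
  have hx : 0 ≤ (z.re : ℂ).re := by simpa using hz.le
  have hpole : (-(r : ℂ) / (z.re : ℂ) ^ 2).re ≤ (-(r : ℂ) / z ^ 2).re := by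
    rw [div_eq_mul_inv, div_eq_mul_inv, ← ofReal_pow, ← ofReal_inv,
      show -(r : ℂ) = ((-r : ℝ) : ℂ) by push_cast; rfl, ← ofReal_mul, ofReal_re, re_ofReal_mul]
    exact mul_le_mul_of_nonpos_left (re_inv_sq_le_inv_re_sq z) (by simp)
  have hseries := hasSum_le (fun k => re_logFactorDeriv2_ofReal_re_le z)
    (hasSum_re (summable_logFactorDeriv2 hpos hsum hx).hasSum)
    (hasSum_re (summable_logFactorDeriv2 hpos hsum hz.le).hasSum)
  simp only [genus2logDeriv2, add_re]
  linarith

theorem sq_im_mul_re_genus2logDeriv2_le (hpos : ∀ k, 0 < lam k)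
    (hsum : Summable fun k => 1 / lam k ^ 3) (hz : 0 < z.re) :
    z.im ^ 2 * (genus2logDeriv2 r a lam z.re).re ≤ z.im * (genus2logDeriv r a b lam z).im := by
  have hx : 0 ≤ (z.re : ℂ).re := by simpa using hz.le
  have hpole : z.im ^ 2 * (-(r : ℂ) / (z.re : ℂ) ^ 2).re ≤ z.im * ((r : ℂ) / z).im := by
    rw [div_eq_mul_inv, div_eq_mul_inv, ← ofReal_pow, ← ofReal_inv,
      show -(r : ℂ) = ((-r : ℝ) : ℂ) by push_cast; rfl, ← ofReal_mul, ofReal_re,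
      show (r : ℂ) = ((r : ℝ) : ℂ) by push_cast; rfl, im_ofReal_mul]
    have := neg_sq_im_div_sq_re_le_im_mul_im_inv hz.ne'
    have hr : (0 : ℝ) ≤ r := r.cast_nonneg
    calc z.im ^ 2 * (-r * (z.re ^ 2)⁻¹) = r * -(z.im ^ 2 / z.re ^ 2) := by ring
      _ ≤ r * (z.im * (z⁻¹).im) := mul_le_mul_of_nonneg_left this hr
      _ = z.im * (r * (z⁻¹).im) := by ring
  have hlin : (2 * (a : ℂ) * z).im = 2 * a * z.im := by
    rw [show 2 * (a : ℂ) = ((2 * a : ℝ) : ℂ) by push_cast; rfl, im_ofReal_mul]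
  have hseries := hasSum_le (fun k => sq_im_mul_re_logFactorDeriv2_le (hpos k) hz.le)
    ((hasSum_re (summable_logFactorDeriv2 hpos hsum hx).hasSum).mul_left (z.im ^ 2))
    ((hasSum_im (summable_logFactorDeriv hpos hsum hz.le).hasSum).mul_left z.im)
  have hconst : (2 * (a : ℂ)).re = 2 * a := by simp
  simp only [genus2logDeriv2, genus2logDeriv, add_re, add_im, hlin, hconst, ofReal_im]
  linear_combination hpole + hseries

end Genus2Derivatives

theorem genus2_conformal_general (r : ℕ) (a b : ℝ) (lam : ℕ → ℝ)
    (hpos : ∀ k, 0 < lam k)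
    (hsum : Summable (fun k => 1 / lam k ^ 3))
    (u : ℝ) (hu : 0 < u)
    (hconv : ∀ x : ℝ, u < x → 0 < (iteratedDeriv 2 (genus2log r a b lam) (x : ℂ)).re) :
    (Set.InjOn (deriv (genus2log r a b lam)) {z : ℂ | u < z.re} ∧
      Set.MapsTo (deriv (genus2log r a b lam))
        {z : ℂ | u < z.re ∧ 0 < z.im} {z : ℂ | 0 < z.im}) ∧
    (Set.InjOn (genus2log r a b lam) {z : ℂ | u < z.re ∧ 0 < z.im} ∧
      Set.InjOn (genus2log r a b lam) {z : ℂ | u < z.re ∧ z.im < 0}) := by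
  have hre : ∀ {z : ℂ}, u < z.re → 0 < z.re := hu.trans
  have hG2 : ∀ {z : ℂ}, u < z.re → 0 < (genus2logDeriv2 r a lam z.re).re := fun hz => by
    rw [← iteratedDeriv_two_genus2log hpos hsum (by simpa using hre hz)]
    exact hconv _ hz
  have hG1 : ∀ {z : ℂ}, u < z.re → z.im ≠ 0 → 0 < z.im * (genus2logDeriv r a b lam z).im :=
    fun hz him => (mul_pos (by positivity) (hG2 hz)).trans_le
      (sq_im_mul_re_genus2logDeriv2_le hpos hsum (hre hz))
  have hlog : ∀ z ∈ {z : ℂ | u < z.re},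
      HasDerivAt (genus2log r a b lam) (genus2logDeriv r a b lam z) z :=
    fun z hz => hasDerivAt_genus2log hpos hsum (hre hz)
  have hderiv : EqOn (deriv (genus2log r a b lam)) (genus2logDeriv r a b lam) {z | u < z.re} :=
    fun z hz => (hlog z hz).deriv
  have hH : Convex ℝ {z : ℂ | u < z.re} := convex_halfSpace_re_gt u
  refine ⟨⟨?_, ?_⟩, ?_, ?_⟩
  · refine InjOn.congr (hH.injOn_of_hasDerivAt_of_re_mul_pos 1
      (fun z hz => hasDerivAt_genus2logDeriv hpos hsum (hre hz)) fun z hz => ?_) hderiv.symm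
    simpa using (hG2 hz).trans_le (re_genus2logDeriv2_ofReal_re_le hpos hsum (hre hz))
  · intro z ⟨hz, him⟩
    show 0 < (deriv (genus2log r a b lam) z).im
    rw [hderiv hz]
    exact pos_of_mul_pos_right (hG1 hz him.ne') him.le
  · refine (hH.inter (convex_halfSpace_im_gt 0)).injOn_of_hasDerivAt_of_re_mul_pos (-I)
      (fun z hz => hlog z hz.1) fun z hz => ?_
    simpa using pos_of_mul_pos_right (hG1 hz.1 hz.2.ne') hz.2.le
  · refine (hH.inter (convex_halfSpace_im_lt 0)).injOn_of_hasDerivAt_of_re_mul_pos I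
      (fun z hz => hlog z hz.1) fun z hz => ?_
    simpa using neg_of_mul_pos_right (hG1 hz.1 hz.2.ne) hz.2.le

/-- Let `r ≥ 1` and `u > 0` with `(log f)″(u) = 0` and
`(log f)″(x) > 0` for real `x > u`.  Then (i) `(log f)′` is injective on
`{Re z > u}` and maps `{Re z > u} ∩ ℂ₊` into `ℂ₊`; (ii) `log f` is injective on
`{Re z > u} ∩ ℂ₊` and on `{Re z > u} ∩ ℂ₋`. -/
theorem genus2_conformal (r : ℕ) (hr : 1 ≤ r) (a b : ℝ) (lam : ℕ → ℝ)
    (hpos : ∀ k, 0 < lam k) (hmono : Monotone lam)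
    (hdiv : ¬ Summable (fun k => 1 / lam k ^ 2))
    (hsum : Summable (fun k => 1 / lam k ^ 3))
    (u : ℝ) (hu : 0 < u)
    (hu2 : iteratedDeriv 2 (genus2log r a b lam) (u : ℂ) = 0)
    (hconv : ∀ x : ℝ, u < x → 0 < (iteratedDeriv 2 (genus2log r a b lam) (x : ℂ)).re) :
    (Set.InjOn (deriv (genus2log r a b lam)) {z : ℂ | u < z.re} ∧
      Set.MapsTo (deriv (genus2log r a b lam))
        {z : ℂ | u < z.re ∧ 0 < z.im} {z : ℂ | 0 < z.im}) ∧
    (Set.InjOn (genus2log r a b lam) {z : ℂ | u < z.re ∧ 0 < z.im} ∧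
      Set.InjOn (genus2log r a b lam) {z : ℂ | u < z.re ∧ z.im < 0}) :=
  genus2_conformal_general r a b lam hpos hsum u hu hconv
end
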